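/- arXiv:0907.3975 — 2 statements merged into one kernel-verified Lean document; each statement's English description precedes it below -/
import Mathlib

section
/- Regard 𝒫 as a smooth real-valued function on ℂ³ ≅ ℝ⁶. For every w = (w₁,w₂,w₃) ∈ ℂ³ and every direction h = (h₁,h₂,h₃) ∈ ℂ³, the Fréchet derivative of 𝒫 at w applied to h equals −2 Re[ h̄₁·F₁(w) + h̄₂·F₂(w) + h̄₃·F₃(w) ], where F₁(w) = w₁(1−|w₁|²) + w₂(w₂w̄₃/2 − w₁w̄₂), F₂(w) = w₂(1 − |w₂|²/2 − |w₁|² − |w₃|²) + w̄₂w₁w₃, and F₃(w) = w₃(1−|w₃|²) + w₂(w₂w̄₁/2 − w₃w̄₂). In other words, the zeroth-order nonlinear terms appearing in the SO(5) Yang–Mills equations are (minus) the gradient of the effective potential 𝒫. -/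
/-- The effective potential `𝒫` of the SO(5) model, viewed as a smooth real-valued
function on `ℂ³ ≅ ℝ⁶`. -/
noncomputable def Pot (w : ℂ × ℂ × ℂ) : ℝ :=
  (1 - Complex.normSq w.1) ^ 2 / 2 + (1 - Complex.normSq w.2.2) ^ 2 / 2
    + Complex.normSq w.2.1 *
        (Complex.normSq w.1 + Complex.normSq w.2.2 + Complex.normSq w.2.1 / 4 - 1)
    - (w.2.1 ^ 2 * (starRingEnd ℂ) (w.1 * w.2.2)).re

/-- `F₁`: the zeroth-order nonlinear term of the first SO(5) Yang–Mills equation. -/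
noncomputable def F₁ (w : ℂ × ℂ × ℂ) : ℂ :=
  w.1 * (1 - (Complex.normSq w.1 : ℂ))
    + w.2.1 * (w.2.1 * (starRingEnd ℂ) w.2.2 / 2 - w.1 * (starRingEnd ℂ) w.2.1)

/-- `F₂`: the zeroth-order nonlinear term of the second SO(5) Yang–Mills equation. -/
noncomputable def F₂ (w : ℂ × ℂ × ℂ) : ℂ :=
  w.2.1 * (1 - (Complex.normSq w.2.1 : ℂ) / 2 - (Complex.normSq w.1 : ℂ)
      - (Complex.normSq w.2.2 : ℂ))
    + (starRingEnd ℂ) w.2.1 * w.1 * w.2.2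

/-- `F₃`: the zeroth-order nonlinear term of the third SO(5) Yang–Mills equation. -/
noncomputable def F₃ (w : ℂ × ℂ × ℂ) : ℂ :=
  w.2.2 * (1 - (Complex.normSq w.2.2 : ℂ))
    + w.2.1 * (w.2.1 * (starRingEnd ℂ) w.1 / 2 - w.2.2 * (starRingEnd ℂ) w.2.1)

/-! `𝒫` is a polynomial in the squared moduli `|wᵢ|²` and in
`Re (w₂² · conj (w₁ w₃)) = ⟪w₁ w₃, w₂²⟫_ℝ`. Since `d|z|² = 2 ⟪z, dz⟫_ℝ`, the chain and product
rules give `d𝒫`, and collecting the coefficient of each `hᵢ` yields `-2 Re Σ h̄ᵢ Fᵢ`. -/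

open Complex ContinuousLinearMap
open scoped InnerProductSpace ComplexConjugate

theorem HasFDerivAt.complex_normSq {E : Type*} [NormedAddCommGroup E] [NormedSpace ℝ E]
    {f : E → ℂ} {f' : E →L[ℝ] ℂ} {x : E} (hf : HasFDerivAt f f' x) :
    HasFDerivAt (fun y => normSq (f y)) (2 • (innerSL ℝ (f x)).comp f') x := by
  simpa only [Complex.sq_norm] using hf.norm_sq

theorem pot_eq_inner (w : ℂ × ℂ × ℂ) :
    Pot w = (1 - normSq w.1) ^ 2 / 2 + (1 - normSq w.2.2) ^ 2 / 2
      + normSq w.2.1 * (normSq w.1 + normSq w.2.2 + normSq w.2.1 / 4 - 1)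
      - ⟪w.1 * w.2.2, w.2.1 ^ 2⟫_ℝ := by
  rw [Complex.inner]
  rfl

/-- `ℂ × ℂ × ℂ` carries the sup norm and no inner product, so the real inner product of
`ℂ³ ≅ ℝ⁶` with `v` is assembled by hand. -/
noncomputable def realInnerCLM (v : ℂ × ℂ × ℂ) : ℂ × ℂ × ℂ →L[ℝ] ℝ :=
  (innerSL ℝ v.1).coprod ((innerSL ℝ v.2.1).coprod (innerSL ℝ v.2.2))

theorem realInnerCLM_apply (v h : ℂ × ℂ × ℂ) :
    realInnerCLM v h = (conj h.1 * v.1 + conj h.2.1 * v.2.1 + conj h.2.2 * v.2.2).re := by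
  simp only [realInnerCLM, coprod_apply, innerSL_apply_apply, Complex.inner, add_re, mul_re,
    conj_re, conj_im]
  ring

theorem hasFDerivAt_pot (w : ℂ × ℂ × ℂ) :
    HasFDerivAt Pot ((-2 : ℝ) • realInnerCLM (F₁ w, F₂ w, F₃ w)) w := by
  have h₁ : HasFDerivAt (fun p : ℂ × ℂ × ℂ => p.1) (fst ℝ ℂ (ℂ × ℂ)) w := hasFDerivAt_fst
  have h₂ : HasFDerivAt (fun p : ℂ × ℂ × ℂ => p.2.1) ((fst ℝ ℂ ℂ).comp (snd ℝ ℂ (ℂ × ℂ))) w :=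
    hasFDerivAt_snd.fst
  have h₃ : HasFDerivAt (fun p : ℂ × ℂ × ℂ => p.2.2) ((snd ℝ ℂ ℂ).comp (snd ℝ ℂ (ℂ × ℂ))) w :=
    hasFDerivAt_snd.snd
  have n₁ := h₁.complex_normSq
  have n₂ := h₂.complex_normSq
  have n₃ := h₃.complex_normSq
  have hP := ((((n₁.const_sub 1).pow 2).mul_const (2⁻¹ : ℝ)).add
      (((n₃.const_sub 1).pow 2).mul_const (2⁻¹ : ℝ))).add
      (n₂.mul (((n₁.add n₃).add (n₂.mul_const (4⁻¹ : ℝ))).sub_const 1))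
    |>.sub ((h₁.mul h₃).inner ℝ (h₂.pow 2))
  refine (hP.congr_of_eventuallyEq (.of_forall fun p => ?_)).congr_fderiv ?_
  · simp only [pot_eq_inner, Pi.add_apply, Pi.sub_apply, Pi.mul_apply]
    ring
  refine ContinuousLinearMap.ext fun h => ?_
  simp only [realInnerCLM_apply, F₁, F₂, F₃, fderivInnerCLM_apply, Complex.inner, normSq_apply,
    sq, Pi.add_apply, Pi.mul_apply, sub_apply, add_apply, neg_apply, smul_apply, comp_apply,
    coe_fst', coe_snd', coe_innerSL_apply, ContinuousLinearMap.prod_apply, smul_eq_mul,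
    nsmul_eq_mul, Nat.cast_ofNat, Nat.add_one_sub_one, pow_one, map_add, map_mul, ofReal_add,
    ofReal_mul, add_re, add_im, sub_re, sub_im, mul_re, mul_im, conj_re, conj_im, one_re, one_im,
    ofReal_re, ofReal_im, re_ofNat, im_ofNat, div_ofNat_re, div_ofNat_im]
  ring

/-- The Fréchet derivative of the effective potential `𝒫` at `w`, applied to a
direction `h`, is `-2 Re[h̄₁ F₁(w) + h̄₂ F₂(w) + h̄₃ F₃(w)]`; i.e. the zeroth-order
nonlinear terms of the SO(5) Yang–Mills equations are minus the gradient of `𝒫`. -/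
theorem fderiv_pot (w h : ℂ × ℂ × ℂ) :
    fderiv ℝ Pot w h =
      -2 * ((starRingEnd ℂ) h.1 * F₁ w + (starRingEnd ℂ) h.2.1 * F₂ w
        + (starRingEnd ℂ) h.2.2 * F₃ w).re := by
  rw [(hasFDerivAt_pot w).fderiv, smul_apply, realInnerCLM_apply, smul_eq_mul]
end

section
/- A point w = (w₁,w₂,w₃) ∈ ℂ³ satisfies the asymptotic (r → ∞) boundary conditions F₁(w) = 0, F₂(w) = 0, F₃(w) = 0 — where F₁(w) = w₁(1−|w₁|²) + w₂(w₂w̄₃/2 − w₁w̄₂), F₂(w) = w₂(1 − |w₂|²/2 − |w₁|² − |w₃|²) + w̄₂w₁w₃, F₃(w) = w₃(1−|w₃|²) + w₂(w₂w̄₁/2 − w₃w̄₂) — if and only if w is a critical point of 𝒫 viewed as a smooth real-valued function on ℂ³ ≅ ℝ⁶ (i.e. the Fréchet derivative of 𝒫 at w is zero). -/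
open ContinuousLinearMap


noncomputable def rmulRe (c : ℂ) : ℂ →L[ℝ] ℝ :=
  Complex.reCLM.comp ((ContinuousLinearMap.mul ℝ ℂ) c)

noncomputable def lmap (a b c : ℂ) : (ℂ × ℂ × ℂ) →L[ℝ] ℝ :=
  (rmulRe a).comp (fst ℝ ℂ (ℂ × ℂ)) +
  (rmulRe b).comp ((fst ℝ ℂ ℂ).comp (snd ℝ ℂ (ℂ × ℂ))) +
  (rmulRe c).comp ((snd ℝ ℂ ℂ).comp (snd ℝ ℂ (ℂ × ℂ)))

lemma lmap_apply (a b c : ℂ) (v : ℂ × ℂ × ℂ) :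
    lmap a b c v = (a * v.1).re + (b * v.2.1).re + (c * v.2.2).re := rfl

lemma hre {f : (ℂ × ℂ × ℂ) → ℂ} {f' : (ℂ × ℂ × ℂ) →L[ℝ] ℂ} {x : ℂ × ℂ × ℂ}
    (h : HasFDerivAt f f' x) :
    HasFDerivAt (fun y => (f y).re) (Complex.reCLM.comp f') x :=
  Complex.reCLM.hasFDerivAt.comp x h

set_option maxHeartbeats 2000000 in
lemma pot_hasFDerivAt (w : ℂ × ℂ × ℂ) :
    HasFDerivAt Pot
      (lmap (-2 * (starRingEnd ℂ) (F₁ w)) (-2 * (starRingEnd ℂ) (F₂ w))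
        (-2 * (starRingEnd ℂ) (F₃ w))) w := by
  have hz1 : HasFDerivAt (fun p : ℂ × ℂ × ℂ => p.1) (fst ℝ ℂ (ℂ × ℂ)) w := hasFDerivAt_fst
  have hz2 : HasFDerivAt (fun p : ℂ × ℂ × ℂ => p.2.1)
      ((fst ℝ ℂ ℂ).comp (snd ℝ ℂ (ℂ × ℂ))) w := hasFDerivAt_snd.fst
  have hz3 : HasFDerivAt (fun p : ℂ × ℂ × ℂ => p.2.2)
      ((snd ℝ ℂ ℂ).comp (snd ℝ ℂ (ℂ × ℂ))) w := hasFDerivAt_snd.snd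
  have hc1 := hz1.star
  have hc2 := hz2.star
  have hc3 := hz3.star
  have hA := hre (hz1.mul hc1)
  have hB := hre (hz2.mul hc2)
  have hC := hre (hz3.mul hc3)
  have hT1 := ((hA.const_sub 1).mul (hA.const_sub 1)).mul_const (2:ℝ)⁻¹
  have hT2 := ((hC.const_sub 1).mul (hC.const_sub 1)).mul_const (2:ℝ)⁻¹
  have hT3 := hB.mul (((hA.add hC).add (hB.mul_const (4:ℝ)⁻¹)).sub_const 1)
  have hT4 := hre ((hz2.mul hz2).mul (hc1.mul hc3))
  have hQ := ((hT1.add hT2).add hT3).sub hT4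
  refine HasFDerivAt.congr_fderiv
    (HasFDerivAt.congr_of_eventuallyEq (f₁ := Pot) hQ
      (Filter.Eventually.of_forall fun p => ?_)) ?_
  · simp [Pot, Complex.star_def, Complex.mul_conj, map_mul, pow_two, div_eq_mul_inv,
      Complex.mul_re, Complex.mul_im, Complex.normSq_apply]
  · ext v <;>
      simp [lmap, rmulRe, F₁, F₂, F₃, Complex.mul_re, Complex.mul_im,
        Complex.normSq_apply, Complex.star_def, pow_two, map_ofNat,
        Complex.inv_re, Complex.inv_im] <;>
      ring

/-- The asymptotic (`r → ∞`) boundary conditions `F₁ = F₂ = F₃ = 0` hold at `w`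
if and only if `w` is a critical point of the effective potential `𝒫` viewed as a
smooth real-valued function on `ℂ³ ≅ ℝ⁶`. -/
theorem asymptotic_bc_iff_critical_point (w : ℂ × ℂ × ℂ) :
    (F₁ w = 0 ∧ F₂ w = 0 ∧ F₃ w = 0) ↔ fderiv ℝ Pot w = 0 := by
  rw [(pot_hasFDerivAt w).fderiv]
  constructor
  · rintro ⟨h1, h2, h3⟩
    rw [h1, h2, h3]
    ext v <;> simp [lmap, rmulRe]
  · intro h
    have hv : ∀ v : ℂ × ℂ × ℂ,
        (-2 * (starRingEnd ℂ) (F₁ w) * v.1).re + (-2 * (starRingEnd ℂ) (F₂ w) * v.2.1).re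
          + (-2 * (starRingEnd ℂ) (F₃ w) * v.2.2).re = 0 := by
      intro v
      rw [← lmap_apply, h]
      rfl
    refine ⟨?_, ?_, ?_⟩
    · have := hv (F₁ w, 0, 0)
      simp [Complex.mul_re, Complex.conj_re, Complex.conj_im] at this
      rw [← Complex.normSq_eq_zero, Complex.normSq_apply]
      nlinarith [this]
    · have := hv (0, F₂ w, 0)
      simp [Complex.mul_re, Complex.conj_re, Complex.conj_im] at this
      rw [← Complex.normSq_eq_zero, Complex.normSq_apply]
      nlinarith [this]
    · have := hv (0, 0, F₃ w)
      simp [Complex.mul_re, Complex.conj_re, Complex.conj_im] at this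
      rw [← Complex.normSq_eq_zero, Complex.normSq_apply]
      nlinarith [this]
end
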